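/- arXiv:math/0603351 — 5 statements merged into one kernel-verified Lean document; each statement's English description precedes it below -/
import Mathlib

section
/- Let f be a dynamic function on I such that f(t)(·) is a bounded function on J for every t ∈ I, and such that the one-sided limits f(τ+) and f(τ−) (in the uniform sense defined below) exist at every point τ ∈ I. Then the set of points t ∈ I at which f does not have an ordinary value (i.e., at which f(t)(·) is not constant on J) is at most countable. -/
/-!
Fix `ε > 0`. Uniform one-sided limits at `τ` force every `f(t)(·)` with `t` close to `τ`,
`t ≠ τ`, to stay within `ε / 2` of a single constant, hence to oscillate by less than `ε`.
So the points of `I` where `f(t)(·)` oscillates by at least `ε` form a discrete subset of `ℝ`,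
which is countable; a non-ordinary point lies in such a set for some `ε = 1 / (n + 1)`.
-/

open Set Filter Topology MeasureTheory

noncomputable section

/-- `J = [-1/2, 1/2]`. -/
def Jset : Set ℝ := Set.Icc (-(1:ℝ)/2) (1/2)

/-- A dynamic function `f` on `I = (a,b)` tends to `c` from the right at `τ`
(uniformly in `s ∈ J`). -/
def RightLim (a b : ℝ) (f : ℝ → ℝ → ℝ) (τ c : ℝ) : Prop :=
  ∀ ε > 0, ∃ η > 0, ∀ t ∈ Set.Ioo a b, t ∈ Set.Ioo τ (τ + η) → ∀ s ∈ Jset, |f t s - c| < ε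

/-- A dynamic function `f` on `I = (a,b)` tends to `c` from the left at `τ`
(uniformly in `s ∈ J`). -/
def LeftLim (a b : ℝ) (f : ℝ → ℝ → ℝ) (τ c : ℝ) : Prop :=
  ∀ ε > 0, ∃ η > 0, ∀ t ∈ Set.Ioo a b, t ∈ Set.Ioo (τ - η) τ → ∀ s ∈ Jset, |f t s - c| < ε

/-- `f` is bounded on `I × J`. -/
def BddOn (a b : ℝ) (f : ℝ → ℝ → ℝ) : Prop :=
  ∃ M, ∀ t ∈ Set.Ioo a b, ∀ s ∈ Jset, |f t s| ≤ M

/-- The one-sided uniform limits of `f` exist at every point of `I = (a,b)`. -/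
def HasSidedLimits (a b : ℝ) (f : ℝ → ℝ → ℝ) : Prop :=
  ∀ τ ∈ Set.Ioo a b, (∃ c, RightLim a b f τ c) ∧ (∃ c, LeftLim a b f τ c)

/-- The support of the dynamic function `f` is contained in the compact
interval `[c,d] ⊂ (a,b)`. -/
def SuppIn (a b : ℝ) (f : ℝ → ℝ → ℝ) (c d : ℝ) : Prop :=
  a < c ∧ c ≤ d ∧ d < b ∧ ∀ t ∉ Set.Icc c d, ∀ s ∈ Jset, f t s = 0

/-- `φ` is a dynamic test function on `I = (a,b)`. -/
def IsDynTest (a b : ℝ) (φ : ℝ → ℝ → ℝ) : Prop :=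
  BddOn a b φ ∧ HasSidedLimits a b φ ∧ ∃ c d, SuppIn a b φ c d

/-- Convergence of a sequence of dynamic test functions in the space `𝒯`:
common compact support in `I` and uniform convergence on `I × J`. -/
def TendstoT (a b : ℝ) (φn : ℕ → ℝ → ℝ → ℝ) (φ : ℝ → ℝ → ℝ) : Prop :=
  (∃ c d, a < c ∧ c ≤ d ∧ d < b ∧ ∀ n, ∀ t ∉ Set.Icc c d, ∀ s ∈ Jset, φn n t s = 0) ∧
  ∀ ε > 0, ∃ N, ∀ n ≥ N, ∀ t ∈ Set.Ioo a b, ∀ s ∈ Jset, |φn n t s - φ t s| < ε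

/-- A functional on dynamic functions is `𝒯`-sequentially continuous. -/
def SeqContT (a b : ℝ) (F : (ℝ → ℝ → ℝ) → ℝ) : Prop :=
  ∀ (φn : ℕ → ℝ → ℝ → ℝ) (φ : ℝ → ℝ → ℝ),
    (∀ n, IsDynTest a b (φn n)) → IsDynTest a b φ → TendstoT a b φn φ →
      Filter.Tendsto (fun n => F (φn n)) Filter.atTop (nhds (F φ))

section

variable {a b : ℝ} {f : ℝ → ℝ → ℝ} {τ c ε : ℝ}

def oscillationSet (a b : ℝ) (f : ℝ → ℝ → ℝ) (ε : ℝ) : Set ℝ :=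
  {t ∈ Ioo a b | ∃ s ∈ Jset, ∃ s' ∈ Jset, ε ≤ |f t s - f t s'|}

lemma RightLim.eventually_abs_sub_lt (h : RightLim a b f τ c) (hτ : τ ∈ Ioo a b)
    (hε : 0 < ε) : ∀ᶠ t in 𝓝[>] τ, ∀ s ∈ Jset, |f t s - c| < ε := by
  obtain ⟨η, hη, hf⟩ := h ε hε
  filter_upwards [nhdsWithin_le_nhds (Ioo_mem_nhds hτ.1 hτ.2),
    Ioo_mem_nhdsGT (lt_add_of_pos_right τ hη)] with t ht ht'
  exact hf t ht ht'

lemma LeftLim.eventually_abs_sub_lt (h : LeftLim a b f τ c) (hτ : τ ∈ Ioo a b)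
    (hε : 0 < ε) : ∀ᶠ t in 𝓝[<] τ, ∀ s ∈ Jset, |f t s - c| < ε := by
  obtain ⟨η, hη, hf⟩ := h ε hε
  filter_upwards [nhdsWithin_le_nhds (Ioo_mem_nhds hτ.1 hτ.2),
    Ioo_mem_nhdsLT (sub_lt_self τ hη)] with t ht ht'
  exact hf t ht ht'

lemma eventually_abs_sub_lt_of_eventually_abs_sub_lt_half {J : Set ℝ} {l : Filter ℝ}
    (h : ∀ᶠ t in l, ∀ s ∈ J, |f t s - c| < ε / 2) :
    ∀ᶠ t in l, ∀ s ∈ J, ∀ s' ∈ J, |f t s - f t s'| < ε := by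
  filter_upwards [h] with t ht s hs s' hs'
  calc |f t s - f t s'| ≤ |f t s - c| + |c - f t s'| := abs_sub_le _ _ _
    _ < ε / 2 + ε / 2 := add_lt_add (ht s hs) (by rw [abs_sub_comm]; exact ht s' hs')
    _ = ε := add_halves ε

lemma HasSidedLimits.eventually_abs_sub_lt (hlim : HasSidedLimits a b f) (hτ : τ ∈ Ioo a b)
    (hε : 0 < ε) : ∀ᶠ t in 𝓝[≠] τ, ∀ s ∈ Jset, ∀ s' ∈ Jset, |f t s - f t s'| < ε := by
  obtain ⟨⟨cR, hR⟩, ⟨cL, hL⟩⟩ := hlim τ hτ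
  rw [← nhdsLT_sup_nhdsGT, eventually_sup]
  exact ⟨eventually_abs_sub_lt_of_eventually_abs_sub_lt_half
      (hL.eventually_abs_sub_lt hτ (half_pos hε)),
    eventually_abs_sub_lt_of_eventually_abs_sub_lt_half
      (hR.eventually_abs_sub_lt hτ (half_pos hε))⟩

lemma HasSidedLimits.isDiscrete_oscillationSet (hlim : HasSidedLimits a b f) (hε : 0 < ε) :
    IsDiscrete (oscillationSet a b f ε) := by
  refine isDiscrete_iff_nhdsNE.2 fun τ hτ => inf_principal_eq_bot.2 ?_
  filter_upwards [hlim.eventually_abs_sub_lt hτ.1 hε] with t ht ⟨_, s, hs, s', hs', hle⟩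
  exact (ht s hs s' hs').not_ge hle

lemma setOf_not_const_subset_iUnion_oscillationSet :
    {t ∈ Ioo a b | ¬ ∃ c, ∀ s ∈ Jset, f t s = c} ⊆ ⋃ n : ℕ, oscillationSet a b f (1 / (n + 1)) := by
  rintro t ⟨ht, hnc⟩
  have h0 : (0 : ℝ) ∈ Jset := by norm_num [Jset]
  obtain ⟨s, hs, hne⟩ : ∃ s ∈ Jset, f t s ≠ f t 0 := by simpa using not_exists.1 hnc (f t 0)
  obtain ⟨n, hn⟩ := exists_nat_one_div_lt (abs_pos.2 (sub_ne_zero.2 hne))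
  exact mem_iUnion.2 ⟨n, ht, s, hs, 0, h0, hn.le⟩

end

theorem stmt_0_general (a b : ℝ) (f : ℝ → ℝ → ℝ)
    (hlim : HasSidedLimits a b f) :
    Set.Countable {t ∈ Set.Ioo a b | ¬ ∃ c, ∀ s ∈ Jset, f t s = c} :=
  .mono setOf_not_const_subset_iUnion_oscillationSet <| countable_iUnion fun _ =>
    (HereditarilyLindelofSpace.isLindelof _).countable_of_isDiscrete
      (hlim.isDiscrete_oscillationSet (by positivity))

/-- A dynamic function on `I = (a,b)` with bounded dynamic values and
existing one-sided uniform limits at every point of `I` has ordinary (constant-in-`s`)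
values outside an at most countable set. -/
theorem stmt_0 (a b : ℝ) (f : ℝ → ℝ → ℝ)
    (hbdd : ∀ t ∈ Set.Ioo a b, ∃ M, ∀ s ∈ Jset, |f t s| ≤ M)
    (hlim : HasSidedLimits a b f) :
    Set.Countable {t ∈ Set.Ioo a b | ¬ ∃ c, ∀ s ∈ Jset, f t s = c} :=
  stmt_0_general a b f hlim
end
end

section
/- Let f be a dynamic function on I such that f(t)(·) is a bounded function on J for every t ∈ I, and such that the one-sided limits f(τ+) and f(τ−) exist at every τ ∈ I. Say f is continuous at τ ∈ I if f has an ordinary value f(τ) at τ and f(τ) = f(τ+) = f(τ−). Then the set T(f) of points of I at which f is not continuous is at most countable. -/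
open Set Filter Topology MeasureTheory

noncomputable section

lemma zero_mem_Jset : (0:ℝ) ∈ Jset := by
  constructor <;> norm_num

lemma close_of_rightLim (a b : ℝ) (f : ℝ → ℝ → ℝ) {t c' : ℝ}
    (h : RightLim a b f t c') (ht : t ∈ Set.Ioo a b) {c ε v : ℝ} (hv : t < v)
    (hval : ∀ u ∈ Set.Ioo a b, u ∈ Set.Ioo t v → |f u 0 - c| < ε) :
    |c' - c| ≤ ε := by
  by_contra hcon
  push_neg at hcon
  obtain ⟨η, hη, hprop⟩ := h (|c' - c| - ε) (by linarith)
  obtain ⟨u, hu1, hu2⟩ := exists_between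
    (show t < min v (min (t + η) b) from lt_min hv (lt_min (by linarith) ht.2))
  rw [lt_min_iff, lt_min_iff] at hu2
  obtain ⟨huv, huη, hub⟩ := hu2
  have huI : u ∈ Set.Ioo a b := ⟨lt_trans ht.1 hu1, hub⟩
  have h1 := hprop u huI ⟨hu1, huη⟩ 0 zero_mem_Jset
  have h2 := hval u huI ⟨hu1, huv⟩
  have h3 : |c' - c| ≤ |c' - f u 0| + |f u 0 - c| := abs_sub_le c' (f u 0) c
  rw [abs_sub_comm c' (f u 0)] at h3
  linarith

lemma close_of_leftLim (a b : ℝ) (f : ℝ → ℝ → ℝ) {t c' : ℝ}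
    (h : LeftLim a b f t c') (ht : t ∈ Set.Ioo a b) {c ε v : ℝ} (hv : v < t)
    (hval : ∀ u ∈ Set.Ioo a b, u ∈ Set.Ioo v t → |f u 0 - c| < ε) :
    |c' - c| ≤ ε := by
  by_contra hcon
  push_neg at hcon
  obtain ⟨η, hη, hprop⟩ := h (|c' - c| - ε) (by linarith)
  obtain ⟨u, hu1, hu2⟩ := exists_between
    (show max v (max (t - η) a) < t from max_lt hv (max_lt (by linarith) ht.1))
  rw [max_lt_iff, max_lt_iff] at hu1
  obtain ⟨huv, huη, hua⟩ := hu1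
  have huI : u ∈ Set.Ioo a b := ⟨hua, lt_trans hu2 ht.2⟩
  have h1 := hprop u huI ⟨huη, hu2⟩ 0 zero_mem_Jset
  have h2 := hval u huI ⟨huv, hu2⟩
  have h3 : |c' - c| ≤ |c' - f u 0| + |f u 0 - c| := abs_sub_le c' (f u 0) c
  rw [abs_sub_comm c' (f u 0)] at h3
  linarith

lemma countable_of_isolated (S : Set ℝ)
    (h : ∀ τ ∈ S, ∃ η > 0, ∀ t ∈ S, t ∈ Set.Ioo (τ - η) (τ + η) → t = τ) :
    S.Countable := by
  have key : ∀ τ ∈ S, ∃ p q : ℚ, (p:ℝ) < τ ∧ τ < q ∧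
      ∀ t ∈ S, (p:ℝ) < t → t < q → t = τ := by
    intro τ hτ
    obtain ⟨η, hη, hiso⟩ := h τ hτ
    obtain ⟨p, hp1, hp2⟩ := exists_rat_btwn (show τ - η < τ by linarith)
    obtain ⟨q, hq1, hq2⟩ := exists_rat_btwn (show τ < τ + η by linarith)
    exact ⟨p, q, hp2, hq1, fun t ht h1 h2 => hiso t ht ⟨by linarith, by linarith⟩⟩
  choose! p q hp hq huniq using key
  have hinj : Set.InjOn (fun τ => (p τ, q τ)) S := by
    intro x hx y hy hxy
    simp only [Prod.mk.injEq] at hxy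
    exact (huniq x hx y hy (by rw [hxy.1]; exact_mod_cast hp y hy)
      (by rw [hxy.2]; exact_mod_cast hq y hy)).symm
  exact (Set.mapsTo_univ _ S).countable_of_injOn hinj Set.countable_univ

/-- The set of points of discontinuity of a dynamic regulated function
(points `τ ∈ I` where `f` fails to have an ordinary value `f(τ)` equal to both
one-sided limits) is at most countable. -/
theorem stmt_2 (a b : ℝ) (f : ℝ → ℝ → ℝ)
    (hbdd : ∀ t ∈ Set.Ioo a b, ∃ M, ∀ s ∈ Jset, |f t s| ≤ M)
    (hlim : HasSidedLimits a b f) :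
    Set.Countable {τ ∈ Set.Ioo a b |
      ¬ ∃ c : ℝ, (∀ s ∈ Jset, f τ s = c) ∧ RightLim a b f τ c ∧ LeftLim a b f τ c} := by
  classical
  have hR : ∀ τ (h : τ ∈ Set.Ioo a b), RightLim a b f τ (Classical.choose (hlim τ h).1) :=
    fun τ h => Classical.choose_spec (hlim τ h).1
  have hL : ∀ τ (h : τ ∈ Set.Ioo a b), LeftLim a b f τ (Classical.choose (hlim τ h).2) :=
    fun τ h => Classical.choose_spec (hlim τ h).2
  set R : ℝ → ℝ := fun τ => if h : τ ∈ Set.Ioo a b then Classical.choose (hlim τ h).1 else 0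
    with hRdef
  set L : ℝ → ℝ := fun τ => if h : τ ∈ Set.Ioo a b then Classical.choose (hlim τ h).2 else 0
    with hLdef
  have hR' : ∀ τ (h : τ ∈ Set.Ioo a b), RightLim a b f τ (R τ) := by
    intro τ h; rw [hRdef]; simp only [dif_pos h]; exact hR τ h
  have hL' : ∀ τ (h : τ ∈ Set.Ioo a b), LeftLim a b f τ (L τ) := by
    intro τ h; rw [hLdef]; simp only [dif_pos h]; exact hL τ h
  set A : ℕ → Set ℝ := fun n => {τ | τ ∈ Set.Ioo a b ∧
    (1/((n:ℝ)+1) ≤ |R τ - L τ| ∨ ∃ s ∈ Jset, 1/((n:ℝ)+1) ≤ |f τ s - R τ|)} with hAdef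
  have hD : ∀ τ ∈ {τ ∈ Set.Ioo a b |
      ¬ ∃ c : ℝ, (∀ s ∈ Jset, f τ s = c) ∧ RightLim a b f τ c ∧ LeftLim a b f τ c},
      ∃ n : ℕ, τ ∈ A n := by
    intro τ hτ
    obtain ⟨hτI, hnc⟩ := hτ
    by_cases hcase : R τ = L τ ∧ ∀ s ∈ Jset, f τ s = R τ
    · exact absurd ⟨R τ, hcase.2, hR' τ hτI, hcase.1 ▸ hL' τ hτI⟩ hnc
    · push_neg at hcase
      by_cases h1 : R τ = L τ
      · obtain ⟨s, hs, hne⟩ := hcase h1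
        obtain ⟨n, hn⟩ := exists_nat_one_div_lt (abs_pos.mpr (sub_ne_zero.mpr hne))
        exact ⟨n, hτI, Or.inr ⟨s, hs, hn.le⟩⟩
      · obtain ⟨n, hn⟩ := exists_nat_one_div_lt (abs_pos.mpr (sub_ne_zero.mpr h1))
        exact ⟨n, hτI, Or.inl hn.le⟩
  have hAcount : ∀ n : ℕ, (A n).Countable := by
    intro n
    apply countable_of_isolated
    intro τ hτ
    have hτI : τ ∈ Set.Ioo a b := hτ.1
    set ε : ℝ := 1/(3*((n:ℝ)+1)) with hε
    have hεpos : 0 < ε := by positivity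
    have h2ε : 2*ε < 1/((n:ℝ)+1) := by
      rw [hε, show 2*(1/(3*((n:ℝ)+1))) = 2/(3*((n:ℝ)+1)) by ring,
        div_lt_div_iff₀ (by positivity) (by positivity)]
      nlinarith [Nat.cast_nonneg (α := ℝ) n]
    obtain ⟨η₁, hη₁, hP⟩ := hR' τ hτI ε hεpos
    obtain ⟨η₂, hη₂, hQ⟩ := hL' τ hτI ε hεpos
    refine ⟨min η₁ η₂, lt_min hη₁ hη₂, ?_⟩
    intro t ht htIoo
    by_contra hne
    obtain ⟨htI, hbad⟩ := ht
    have hm1 : min η₁ η₂ ≤ η₁ := min_le_left _ _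
    have hm2 : min η₁ η₂ ≤ η₂ := min_le_right _ _
    obtain ⟨hta, htb⟩ := htIoo
    rcases lt_or_gt_of_ne hne with hlt | hgt
    · -- t < τ
      have htmem : t ∈ Set.Ioo (τ - η₂) τ := ⟨by linarith, hlt⟩
      have hvals : ∀ s ∈ Jset, |f t s - L τ| < ε := hQ t htI htmem
      have hRt : |R t - L τ| ≤ ε := close_of_rightLim a b f (hR' t htI) htI hlt
        (fun u huI huIoo => hQ u huI ⟨by linarith [htmem.1, huIoo.1], huIoo.2⟩ 0 zero_mem_Jset)
      have hLt : |L t - L τ| ≤ ε := close_of_leftLim a b f (hL' t htI) htI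
        (show τ - η₂ < t from htmem.1)
        (fun u huI huIoo => hQ u huI ⟨huIoo.1, lt_trans huIoo.2 hlt⟩ 0 zero_mem_Jset)
      rcases hbad with hb1 | ⟨s, hs, hb2⟩
      · have h3 : |R t - L t| ≤ |R t - L τ| + |L τ - L t| := abs_sub_le _ _ _
        rw [abs_sub_comm (L τ) (L t)] at h3
        linarith
      · have h3 : |f t s - R t| ≤ |f t s - L τ| + |L τ - R t| := abs_sub_le _ _ _
        rw [abs_sub_comm (L τ) (R t)] at h3
        have := hvals s hs
        linarith
    · -- τ < t
      have htmem : t ∈ Set.Ioo τ (τ + η₁) := ⟨hgt, by linarith⟩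
      have hvals : ∀ s ∈ Jset, |f t s - R τ| < ε := hP t htI htmem
      have hRt : |R t - R τ| ≤ ε := close_of_rightLim a b f (hR' t htI) htI
        (show t < τ + η₁ from htmem.2)
        (fun u huI huIoo => hP u huI ⟨lt_trans hgt huIoo.1, huIoo.2⟩ 0 zero_mem_Jset)
      have hLt : |L t - R τ| ≤ ε := close_of_leftLim a b f (hL' t htI) htI hgt
        (fun u huI huIoo => hP u huI ⟨huIoo.1, lt_trans huIoo.2 htmem.2⟩ 0 zero_mem_Jset)
      rcases hbad with hb1 | ⟨s, hs, hb2⟩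
      · have h3 : |R t - L t| ≤ |R t - R τ| + |R τ - L t| := abs_sub_le _ _ _
        rw [abs_sub_comm (R τ) (L t)] at h3
        linarith
      · have h3 : |f t s - R t| ≤ |f t s - R τ| + |R τ - R t| := abs_sub_le _ _ _
        rw [abs_sub_comm (R τ) (R t)] at h3
        have := hvals s hs
        linarith
  have hsub : {τ ∈ Set.Ioo a b |
      ¬ ∃ c : ℝ, (∀ s ∈ Jset, f τ s = c) ∧ RightLim a b f τ c ∧ LeftLim a b f τ c} ⊆
      ⋃ n, A n := by
    intro τ hτ
    obtain ⟨n, hn⟩ := hD τ hτ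
    exact Set.mem_iUnion.mpr ⟨n, hn⟩
  exact (Set.countable_iUnion hAcount).mono hsub
end
end

section
/- Let F_n (n ∈ ℕ) be linear functionals on the real vector space of dynamic functions on I, each 𝒯-sequentially continuous, and suppose that for every dynamic test function φ the real sequence (F_n(φ)) converges. Then for every sequence of dynamic test functions φ_n converging to 0 in 𝒯, one has F_n(φ_n) → 0 as n → ∞. -/
open Set Filter Topology MeasureTheory

noncomputable section

/-! Fix a compact interval `[c, d] ⊂ I` containing the supports of all `φₙ`. Viewed as bounded
functions on `ℝ × ℝ`, the test functions supported in `[c, d]` form a closed subspace of `ℓ^∞`,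
because one-sided uniform limits survive uniform convergence; hence they form a Banach space. On it
each `Fₙ` is continuous (sequential continuity suffices in a metric space) and the family is
pointwise bounded, so Banach–Steinhaus gives `‖Fₙ‖ ≤ C`. Since `Fₙ φ` only depends on `φ` on
`ℝ × J`, `|Fₙ φₙ| ≤ C sup_{I × J} |φₙ| → 0`. -/

open Function lp
open scoped lp ENNReal

section UniformLimits

variable {ι α β E : Type*}

theorem TendstoUniformly.exists_tendsto [MetricSpace β] [CompleteSpace β] {l : Filter α}
    {F : ℕ → α → β} {f : α → β} {L : ℕ → β} (hF : TendstoUniformly F f atTop)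
    (hL : ∀ k, Tendsto (F k) l (𝓝 (L k))) : ∃ c, Tendsto f l (𝓝 c) := by
  rcases l.eq_or_neBot with rfl | hl
  · exact ⟨L 0, tendsto_bot⟩
  have hLcauchy : CauchySeq L := by
    refine Metric.cauchySeq_iff'.2 fun ε hε => ?_
    obtain ⟨N, hN⟩ := Metric.uniformCauchySeqOn_iff.1
      (tendstoUniformlyOn_univ.2 hF).uniformCauchySeqOn (ε / 2) (half_pos hε)
    refine ⟨N, fun n hn => ?_⟩
    have hle : dist (L n) (L N) ≤ ε / 2 :=
      le_of_tendsto ((hL n).dist (hL N))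
        (Eventually.of_forall fun x => (hN n hn N le_rfl x (mem_univ x)).le)
    linarith
  exact ⟨_, hF.tendsto_of_eventually_tendsto (Eventually.of_forall hL)
    hLcauchy.tendsto_limUnder⟩

variable [NormedAddCommGroup E]

theorem lp.tendstoUniformly_of_tendsto_infty {u : ι → ℓ^∞(α, E)} {f : ℓ^∞(α, E)}
    {l : Filter ι} (hu : Tendsto u l (𝓝 f)) :
    TendstoUniformly (fun i => ⇑(u i)) f l := by
  refine Metric.tendstoUniformly_iff.2 fun ε hε => ?_
  filter_upwards [Metric.tendsto_nhds.1 hu ε hε] with i hi x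
  calc dist (f x) (u i x) = ‖(f - u i) x‖ := by rw [dist_eq_norm, coeFn_sub, Pi.sub_apply]
    _ ≤ ‖f - u i‖ := norm_apply_le_norm ENNReal.top_ne_zero _ x
    _ < ε := by rwa [← dist_eq_norm, dist_comm]

variable [NormedSpace ℝ E]

def lp.limitSubmodule (l : Filter α) : Submodule ℝ ℓ^∞(α, E) where
  carrier := {f | ∃ c, Tendsto f l (𝓝 c)}
  add_mem' := fun ⟨c, hc⟩ ⟨c', hc'⟩ => ⟨c + c', hc.add hc'⟩
  zero_mem' := ⟨0, tendsto_const_nhds⟩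
  smul_mem' r _ := fun ⟨c, hc⟩ => ⟨r • c, hc.const_smul r⟩

@[simp]
theorem lp.mem_limitSubmodule {l : Filter α} {f : ℓ^∞(α, E)} :
    f ∈ limitSubmodule l ↔ ∃ c, Tendsto f l (𝓝 c) :=
  Iff.rfl

theorem lp.isClosed_limitSubmodule [CompleteSpace E] (l : Filter α) :
    IsClosed (limitSubmodule (E := E) l : Set ℓ^∞(α, E)) := by
  refine IsSeqClosed.isClosed fun u f hu huf => ?_
  choose L hL using hu
  exact (tendstoUniformly_of_tendsto_infty huf).exists_tendsto hL

end UniformLimits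

section SidedLimits

variable {a b : ℝ} {f g : ℝ → ℝ → ℝ}

def sidedFilter (a b : ℝ) (l : Filter ℝ) : Filter (ℝ × ℝ) := (l ⊓ 𝓟 (Ioo a b)) ×ˢ 𝓟 Jset

theorem sidedFilter_le_principal (l : Filter ℝ) : sidedFilter a b l ≤ 𝓟 (Ioo a b ×ˢ Jset) := by
  rw [← prod_principal_principal]
  exact prod_mono inf_le_right le_rfl

theorem nhdsGT_basis_Ioo_add (τ : ℝ) : (𝓝[>] τ).HasBasis (0 < ·) fun η => Ioo τ (τ + η) :=
  (nhdsGT_basis τ).to_hasBasis (fun u hu => ⟨u - τ, sub_pos.2 hu, by simp⟩)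
    fun η hη => ⟨τ + η, lt_add_of_pos_right τ hη, subset_rfl⟩

theorem nhdsLT_basis_Ioo_sub (τ : ℝ) : (𝓝[<] τ).HasBasis (0 < ·) fun η => Ioo (τ - η) τ :=
  (nhdsLT_basis τ).to_hasBasis (fun u hu => ⟨τ - u, sub_pos.2 hu, by simp⟩)
    fun η hη => ⟨τ - η, sub_lt_self τ hη, subset_rfl⟩

theorem tendsto_sidedFilter_iff {l : Filter ℝ} {S : ℝ → Set ℝ} (hl : l.HasBasis (0 < ·) S)
    {c : ℝ} : Tendsto (uncurry f) (sidedFilter a b l) (𝓝 c) ↔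
      ∀ ε > 0, ∃ η > 0, ∀ t ∈ Ioo a b, t ∈ S η → ∀ s ∈ Jset, |f t s - c| < ε := by
  rw [sidedFilter, ((hl.inf_principal _).prod_principal _).tendsto_iff Metric.nhds_basis_ball]
  simp only [mem_prod, mem_inter_iff, Metric.mem_ball, Real.dist_eq, Prod.forall,
    uncurry_apply_pair, and_imp]
  exact forall₂_congr fun ε _ => exists_congr fun η => and_congr_right fun _ =>
    ⟨fun h t ht hS s hs => h t s hS ht hs, fun h t s hS ht hs => h t ht hS s hs⟩

theorem rightLim_iff_tendsto {τ c : ℝ} :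
    RightLim a b f τ c ↔ Tendsto (uncurry f) (sidedFilter a b (𝓝[>] τ)) (𝓝 c) :=
  (tendsto_sidedFilter_iff (nhdsGT_basis_Ioo_add τ)).symm

theorem leftLim_iff_tendsto {τ c : ℝ} :
    LeftLim a b f τ c ↔ Tendsto (uncurry f) (sidedFilter a b (𝓝[<] τ)) (𝓝 c) :=
  (tendsto_sidedFilter_iff (nhdsLT_basis_Ioo_sub τ)).symm

theorem HasSidedLimits.congr (hf : HasSidedLimits a b f)
    (hfg : ∀ t ∈ Ioo a b, ∀ s ∈ Jset, f t s = g t s) : HasSidedLimits a b g := by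
  have hlim (l : Filter ℝ) (c : ℝ) (h : Tendsto (uncurry f) (sidedFilter a b l) (𝓝 c)) :
      Tendsto (uncurry g) (sidedFilter a b l) (𝓝 c) :=
    h.congr' <| eventuallyEq_of_mem (sidedFilter_le_principal l (mem_principal_self _))
      fun p hp => hfg p.1 hp.1 p.2 hp.2
  simp only [HasSidedLimits, rightLim_iff_tendsto, leftLim_iff_tendsto] at hf ⊢
  exact fun τ hτ => (hf τ hτ).imp (.imp (hlim _)) (.imp (hlim _))

end SidedLimits

section TestSubmodule

variable {a b c d : ℝ}

variable (a b c d) in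
def testSubmodule : Submodule ℝ ℓ^∞(ℝ × ℝ, ℝ) :=
  (⨅ τ ∈ Ioo a b,
      limitSubmodule (sidedFilter a b (𝓝[>] τ)) ⊓ limitSubmodule (sidedFilter a b (𝓝[<] τ))) ⊓
    ⨅ p ∈ (Icc c d)ᶜ ×ˢ Jset, (evalCLM ℝ (fun _ => ℝ) ∞ p).ker

theorem mem_testSubmodule {e : ℓ^∞(ℝ × ℝ, ℝ)} : e ∈ testSubmodule a b c d ↔
    HasSidedLimits a b (curry e) ∧ ∀ t ∉ Icc c d, ∀ s ∈ Jset, e (t, s) = 0 := by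
  simp only [testSubmodule, Submodule.mem_inf, Submodule.mem_iInf, mem_limitSubmodule,
    HasSidedLimits, rightLim_iff_tendsto, leftLim_iff_tendsto, uncurry_curry, mem_prod,
    mem_compl_iff, LinearMap.mem_ker, evalCLM, Prod.forall]
  exact and_congr_right fun _ => forall_congr' fun t =>
    ⟨fun h ht s hs => h s ⟨ht, hs⟩, fun h s hts => h hts.1 s hts.2⟩

theorem isClosed_testSubmodule : IsClosed (testSubmodule a b c d : Set ℓ^∞(ℝ × ℝ, ℝ)) := by
  simp only [testSubmodule, Submodule.coe_inf, Submodule.coe_iInf]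
  exact .inter
    (isClosed_biInter fun _ _ => .inter (isClosed_limitSubmodule _) (isClosed_limitSubmodule _))
    (isClosed_biInter fun p _ => (evalCLM ℝ _ ∞ p).isClosed_ker)

instance : CompleteSpace (testSubmodule a b c d) :=
  isClosed_testSubmodule.completeSpace_coe

def toDyn : ℓ^∞(ℝ × ℝ, ℝ) →ₗ[ℝ] (ℝ → ℝ → ℝ) where
  toFun e := curry e
  map_add' _ _ := rfl
  map_smul' _ _ := rfl

@[simp]
theorem toDyn_apply (e : ℓ^∞(ℝ × ℝ, ℝ)) (t s : ℝ) : toDyn e t s = e (t, s) :=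
  rfl

theorem isDynTest_toDyn (hac : a < c) (hcd : c ≤ d) (hdb : d < b) {e : ℓ^∞(ℝ × ℝ, ℝ)}
    (he : e ∈ testSubmodule a b c d) : IsDynTest a b (toDyn e) :=
  ⟨⟨‖e‖, fun t _ s _ => norm_apply_le_norm ENNReal.top_ne_zero e (t, s)⟩,
    (mem_testSubmodule.1 he).1, c, d, hac, hcd, hdb, (mem_testSubmodule.1 he).2⟩

theorem tendstoT_toDyn (hac : a < c) (hcd : c ≤ d) (hdb : d < b) {u : ℕ → testSubmodule a b c d}
    {x : testSubmodule a b c d} (hu : Tendsto u atTop (𝓝 x)) :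
    TendstoT a b (fun k => toDyn (u k)) (toDyn x) := by
  refine ⟨⟨c, d, hac, hcd, hdb, fun k => (mem_testSubmodule.1 (u k).2).2⟩, fun ε hε => ?_⟩
  have hunif := Metric.tendstoUniformly_iff.1
    (tendstoUniformly_of_tendsto_infty ((continuous_subtype_val.tendsto x).comp hu)) ε hε
  obtain ⟨N, hN⟩ := eventually_atTop.1 hunif
  exact ⟨N, fun k hk t _ s _ => by simpa [Real.dist_eq, abs_sub_comm] using hN k hk (t, s)⟩

end TestSubmodule

section Functionals

variable {a b c d : ℝ} {φ : ℝ → ℝ → ℝ}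

theorem isDynTest_of_forall_eq_zero (hab : a < b) (hφ : ∀ t, ∀ s ∈ Jset, φ t s = 0) :
    IsDynTest a b φ := by
  have hlim (S : ℝ → Set ℝ) :
      ∀ ε > 0, ∃ η > 0, ∀ t ∈ Ioo a b, t ∈ S η → ∀ s ∈ Jset, |φ t s - 0| < ε :=
    fun ε hε => ⟨1, one_pos, fun t _ _ s hs => by simpa [hφ t s hs] using hε⟩
  exact ⟨⟨0, fun t _ s hs => by simp [hφ t s hs]⟩,
    fun _ _ => ⟨⟨0, hlim _⟩, ⟨0, hlim _⟩⟩,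
    (a + b) / 2, (a + b) / 2, by linarith, le_rfl, by linarith, fun t _ s hs => hφ t s hs⟩

variable {F : (ℝ → ℝ → ℝ) →ₗ[ℝ] ℝ}

theorem SeqContT.map_congr (hF : SeqContT a b F) (hab : a < b) {f g : ℝ → ℝ → ℝ}
    (hfg : ∀ t, ∀ s ∈ Jset, f t s = g t s) : F f = F g := by
  have hδ : ∀ t, ∀ s ∈ Jset, (f - g) t s = 0 := fun t s hs => sub_eq_zero.2 (hfg t s hs)
  have hconst : TendstoT a b (fun _ => f - g) 0 :=
    ⟨⟨(a + b) / 2, (a + b) / 2, by linarith, le_rfl, by linarith, fun _ t _ s hs => hδ t s hs⟩,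
      fun ε hε => ⟨0, fun _ _ t _ s hs => by simpa [hδ t s hs] using hε⟩⟩
  have := hF _ _ (fun _ => isDynTest_of_forall_eq_zero hab hδ)
    (isDynTest_of_forall_eq_zero (φ := 0) hab fun _ _ _ => rfl) hconst
  rwa [map_zero, tendsto_const_nhds_iff, map_sub, sub_eq_zero] at this

theorem SeqContT.continuous_comp_toDyn (hF : SeqContT a b F) (hac : a < c) (hcd : c ≤ d)
    (hdb : d < b) : Continuous fun x : testSubmodule a b c d => F (toDyn x) :=
  continuous_iff_seqContinuous.2 fun u x hu =>
    hF _ _ (fun k => isDynTest_toDyn hac hcd hdb (u k).2) (isDynTest_toDyn hac hcd hdb x.2)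
      (tendstoT_toDyn hac hcd hdb hu)

def SeqContT.toCLM (hF : SeqContT a b F) (hac : a < c) (hcd : c ≤ d) (hdb : d < b) :
    testSubmodule a b c d →L[ℝ] ℝ :=
  ⟨F ∘ₗ toDyn ∘ₗ (testSubmodule a b c d).subtype, hF.continuous_comp_toDyn hac hcd hdb⟩

end Functionals

section Representation

variable {a b c d : ℝ} {φ : ℝ → ℝ → ℝ}

def zeroOffJ (φ : ℝ → ℝ → ℝ) : ℝ × ℝ → ℝ := (Prod.snd ⁻¹' Jset).indicator (uncurry φ)

theorem norm_zeroOffJ_le (hac : a < c) (hdb : d < b)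
    (hsupp : ∀ t ∉ Icc c d, ∀ s ∈ Jset, φ t s = 0) {M : ℝ} (hM : 0 ≤ M)
    (hφM : ∀ t ∈ Ioo a b, ∀ s ∈ Jset, |φ t s| ≤ M) (p : ℝ × ℝ) : ‖zeroOffJ φ p‖ ≤ M := by
  obtain ⟨t, s⟩ := p
  by_cases hs : s ∈ Jset
  · by_cases ht : t ∈ Icc c d
    · simpa [zeroOffJ, hs] using hφM t ⟨hac.trans_le ht.1, ht.2.trans_lt hdb⟩ s hs
    · simpa [zeroOffJ, hs, hsupp t ht s hs] using hM
  · simpa [zeroOffJ, hs] using hM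

theorem exists_mem_testSubmodule_eq (hac : a < c) (hdb : d < b) (hφ : IsDynTest a b φ)
    (hsupp : ∀ t ∉ Icc c d, ∀ s ∈ Jset, φ t s = 0) :
    ∃ e ∈ testSubmodule a b c d, (∀ t, ∀ s ∈ Jset, φ t s = toDyn e t s) ∧
      ∀ M, 0 ≤ M → (∀ t ∈ Ioo a b, ∀ s ∈ Jset, |φ t s| ≤ M) → ‖e‖ ≤ M := by
  obtain ⟨⟨M₀, hM₀⟩, hlim, -⟩ := hφ
  let e : ℓ^∞(ℝ × ℝ, ℝ) := ⟨zeroOffJ φ, memℓp_infty ⟨max M₀ 0, forall_mem_range.2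
    (norm_zeroOffJ_le hac hdb hsupp (le_max_right _ _) fun t ht s hs =>
      (hM₀ t ht s hs).trans (le_max_left _ _))⟩⟩
  have heq : ∀ t, ∀ s ∈ Jset, φ t s = toDyn e t s := fun t s hs => by
    simp [e, zeroOffJ, hs]
  refine ⟨e, mem_testSubmodule.2 ⟨?_, fun t ht s hs => ?_⟩, heq,
    fun M hM hφM => norm_le_of_forall_le hM (norm_zeroOffJ_le hac hdb hsupp hM hφM)⟩
  · exact hlim.congr fun t _ s hs => heq t s hs
  · rw [← toDyn_apply, ← heq t s hs, hsupp t ht s hs]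

end Representation

/-- if linear `𝒯`-sequentially continuous functionals `Fₙ` converge
pointwise on dynamic test functions, then `Fₙ(φₙ) → 0` whenever `φₙ → 0` in `𝒯`. -/
theorem stmt_8 (a b : ℝ) (F : ℕ → (ℝ → ℝ → ℝ) →ₗ[ℝ] ℝ)
    (hcont : ∀ n, SeqContT a b (F n))
    (hconv : ∀ φ, IsDynTest a b φ →
      ∃ L, Filter.Tendsto (fun n => F n φ) Filter.atTop (nhds L))
    (φn : ℕ → ℝ → ℝ → ℝ) (hφn : ∀ n, IsDynTest a b (φn n))
    (h0 : TendstoT a b φn (fun _ _ => 0)) :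
    Filter.Tendsto (fun n => F n (φn n)) Filter.atTop (nhds 0) := by
  obtain ⟨⟨c, d, hac, hcd, hdb, hsupp⟩, hunif⟩ := h0
  let G n := (hcont n).toCLM hac hcd hdb
  obtain ⟨C, hC⟩ : ∃ C, ∀ n, ‖G n‖ ≤ C := banach_steinhaus fun x => by
    obtain ⟨L, hL⟩ := hconv _ (isDynTest_toDyn hac hcd hdb x.2)
    exact hL.norm.bddAbove_range.imp fun C hC n => hC (mem_range_self n)
  choose e he_mem he_eq he_norm using fun n =>
    exists_mem_testSubmodule_eq hac hdb (hφn n) (hsupp n)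
  have hFe n : F n (φn n) = G n ⟨e n, he_mem n⟩ :=
    (hcont n).map_congr (hac.trans (hcd.trans_lt hdb)) (he_eq n)
  have he : Tendsto (fun n => ‖e n‖) atTop (𝓝 0) := by
    refine Metric.tendsto_atTop.2 fun ε hε => ?_
    obtain ⟨N, hN⟩ := hunif (ε / 2) (half_pos hε)
    refine ⟨N, fun n hn => ?_⟩
    rw [Real.dist_eq, sub_zero, abs_norm]
    exact (he_norm n _ (half_pos hε).le fun t ht s hs => by
      simpa using (hN n hn t ht s hs).le).trans_lt (half_lt_self hε)
  refine squeeze_zero_norm (fun n => ?_) (by simpa using he.const_mul C)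
  rw [hFe]
  exact (G n).le_of_opNorm_le (hC n) _
end
end

section
/- Let F_n (n ∈ ℕ) be linear functionals on the real vector space of dynamic functions on I, each 𝒯-sequentially continuous, and suppose that for every dynamic test function φ the limit F(φ) := lim_{n→∞} F_n(φ) exists. Then the limit functional F is 𝒯-sequentially continuous: whenever dynamic test functions φ_k → φ in 𝒯, one has F(φ_k) → F(φ). -/
open Set Filter Topology MeasureTheory

noncomputable section

namespace Stmt9

/-- Generic one-sided uniform limit with window family `W`. -/
def WLim (a b : ℝ) (W : ℝ → Set ℝ) (f : ℝ → ℝ → ℝ) (c : ℝ) : Prop :=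
  ∀ ε > 0, ∃ η > 0, ∀ t ∈ Set.Ioo a b, t ∈ W η → ∀ s ∈ Jset, |f t s - c| < ε

lemma rightLim_eq_wlim (a b τ c : ℝ) (f : ℝ → ℝ → ℝ) :
    RightLim a b f τ c ↔ WLim a b (fun η => Set.Ioo τ (τ + η)) f c := Iff.rfl

lemma leftLim_eq_wlim (a b τ c : ℝ) (f : ℝ → ℝ → ℝ) :
    LeftLim a b f τ c ↔ WLim a b (fun η => Set.Ioo (τ - η) τ) f c := Iff.rfl

lemma wlim_add {a b : ℝ} {W : ℝ → Set ℝ} (hmono : ∀ ⦃η η'⦄, η ≤ η' → W η ⊆ W η')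
    {f g : ℝ → ℝ → ℝ} {c c' : ℝ} (hf : WLim a b W f c) (hg : WLim a b W g c') :
    WLim a b W (fun t s => f t s + g t s) (c + c') := by
  intro ε hε
  obtain ⟨η₁, hη₁, h₁⟩ := hf (ε/2) (by positivity)
  obtain ⟨η₂, hη₂, h₂⟩ := hg (ε/2) (by positivity)
  refine ⟨min η₁ η₂, lt_min hη₁ hη₂, fun t ht htW s hs => ?_⟩
  have e1 := h₁ t ht (hmono (min_le_left _ _) htW) s hs
  have e2 := h₂ t ht (hmono (min_le_right _ _) htW) s hs
  calc |f t s + g t s - (c + c')| = |(f t s - c) + (g t s - c')| := by ring_nf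
    _ ≤ |f t s - c| + |g t s - c'| := abs_add_le _ _
    _ < ε/2 + ε/2 := by linarith
    _ = ε := by ring

lemma wlim_smul {a b : ℝ} {W : ℝ → Set ℝ} {f : ℝ → ℝ → ℝ} {c : ℝ} (r : ℝ)
    (hf : WLim a b W f c) : WLim a b W (fun t s => r * f t s) (r * c) := by
  intro ε hε
  obtain ⟨η, hη, h⟩ := hf (ε / (|r| + 1)) (by positivity)
  refine ⟨η, hη, fun t ht htW s hs => ?_⟩
  have := h t ht htW s hs
  have hr : |r| ≥ 0 := abs_nonneg r
  calc |r * f t s - r * c| = |r| * |f t s - c| := by rw [← abs_mul]; ring_nf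
    _ ≤ |r| * (ε / (|r| + 1)) := by nlinarith [abs_nonneg (f t s - c)]
    _ < ε := by
        rw [← mul_div_assoc, div_lt_iff₀ (by positivity)]
        nlinarith

lemma wlim_zero (a b : ℝ) (W : ℝ → Set ℝ) :
    WLim a b W (fun _ _ => (0:ℝ)) 0 := by
  intro ε hε
  exact ⟨1, one_pos, fun t _ _ s _ => by simpa using hε⟩

/-- A uniform limit of functions having a `W`-limit has a `W`-limit. -/
lemma wlim_of_unif {a b : ℝ} {W : ℝ → Set ℝ}
    (hW : ∀ η > 0, ∃ t ∈ Set.Ioo a b, t ∈ W η)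
    (hmono : ∀ ⦃η η'⦄, η ≤ η' → W η ⊆ W η')
    {f : ℝ → ℝ → ℝ} {g : ℕ → ℝ → ℝ → ℝ}
    (hg : ∀ m, ∃ c, WLim a b W (g m) c)
    (happ : ∀ m : ℕ, ∀ t s, |g m t s - f t s| ≤ 1 / (m + 1)) :
    ∃ c, WLim a b W f c := by
  choose c hc using hg
  have key : ∀ m l : ℕ, |c m - c l| ≤ 1 / (m + 1) + 1 / (l + 1) := by
    intro m l
    refine le_of_forall_pos_le_add fun ε hε => ?_
    obtain ⟨η₁, hη₁, h₁⟩ := hc m (ε/2) (by positivity)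
    obtain ⟨η₂, hη₂, h₂⟩ := hc l (ε/2) (by positivity)
    obtain ⟨t, ht, htW⟩ := hW (min η₁ η₂) (lt_min hη₁ hη₂)
    have hs0 : (0:ℝ) ∈ Jset := by constructor <;> norm_num [Jset]
    have e1 := h₁ t ht (hmono (min_le_left _ _) htW) 0 hs0
    have e2 := h₂ t ht (hmono (min_le_right _ _) htW) 0 hs0
    have a1 := happ m t 0
    have a2 := happ l t 0
    have : |c m - c l| ≤ |g m t 0 - c m| + |g m t 0 - f t 0| + |g l t 0 - f t 0|
        + |g l t 0 - c l| := by
      have := abs_sub_abs_le_abs_sub (c m) (c l)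
      calc |c m - c l| = |(g m t 0 - c l) - (g m t 0 - c m)| := by ring_nf
        _ ≤ |g m t 0 - c l| + |g m t 0 - c m| := abs_sub _ _
        _ ≤ (|g m t 0 - f t 0| + |f t 0 - g l t 0| + |g l t 0 - c l|) + |g m t 0 - c m| := by
            have : |g m t 0 - c l| ≤ |g m t 0 - f t 0| + |f t 0 - g l t 0| + |g l t 0 - c l| := by
              calc |g m t 0 - c l| = |(g m t 0 - f t 0) + (f t 0 - g l t 0) + (g l t 0 - c l)| := by
                    ring_nf
                _ ≤ _ := by
                    refine (abs_add_le _ _).trans ?_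
                    gcongr
                    exact abs_add_le _ _
            linarith
        _ = _ := by rw [abs_sub_comm (f t 0) (g l t 0)]; ring
    linarith
  have hcauchy : CauchySeq c := by
    rw [Metric.cauchySeq_iff']
    intro ε hε
    obtain ⟨N, hN⟩ := exists_nat_one_div_lt (show (0:ℝ) < ε/2 by positivity)
    refine ⟨N, fun n hn => ?_⟩
    have h1 : (1:ℝ) / (n + 1) ≤ 1 / (N + 1) := by
      apply one_div_le_one_div_of_le (by positivity)
      exact_mod_cast by exact_mod_cast Nat.succ_le_succ hn
    have := key n N
    rw [Real.dist_eq]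
    calc |c n - c N| ≤ 1/(n+1) + 1/(N+1) := this
      _ ≤ 1/(N+1) + 1/(N+1) := by linarith
      _ < ε/2 + ε/2 := by linarith [hN]
      _ = ε := by ring
  obtain ⟨cinf, hcinf⟩ := cauchySeq_tendsto_of_complete hcauchy
  refine ⟨cinf, fun ε hε => ?_⟩
  obtain ⟨m, hm⟩ := exists_nat_one_div_lt (show (0:ℝ) < ε/4 by positivity)
  have hmc : |c m - cinf| ≤ 1 / (m + 1) := by
    have h1 : Tendsto (fun l : ℕ => |c m - c l|) atTop (nhds |c m - cinf|) :=
      ((tendsto_const_nhds.sub hcinf).abs)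
    have h2 : Tendsto (fun l : ℕ => 1/(m+1) + 1/((l:ℝ)+1)) atTop (nhds (1/(m+1) + 0)) :=
      tendsto_const_nhds.add (tendsto_one_div_add_atTop_nhds_zero_nat)
    have := le_of_tendsto_of_tendsto h1 h2 (Eventually.of_forall fun l => key m l)
    simpa using this
  obtain ⟨η, hη, h⟩ := hc m (ε/4) (by positivity)
  refine ⟨η, hη, fun t ht htW s hs => ?_⟩
  have e := h t ht htW s hs
  have ap := happ m t s
  have hm1 : (1:ℝ)/(m+1) < ε/4 := by exact_mod_cast hm
  calc |f t s - cinf| = |(f t s - g m t s) + (g m t s - c m) + (c m - cinf)| := by ring_nf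
    _ ≤ |f t s - g m t s| + |g m t s - c m| + |c m - cinf| := by
        refine (abs_add_le _ _).trans ?_; gcongr; exact abs_add_le _ _
    _ < ε := by rw [abs_sub_comm (f t s)] ; linarith

end Stmt9

namespace Stmt9

lemma right_mono (τ : ℝ) : ∀ ⦃η η' : ℝ⦄, η ≤ η' →
    Set.Ioo τ (τ + η) ⊆ Set.Ioo τ (τ + η') := by
  intro η η' h t ⟨h1, h2⟩; exact ⟨h1, by linarith⟩

lemma left_mono (τ : ℝ) : ∀ ⦃η η' : ℝ⦄, η ≤ η' →
    Set.Ioo (τ - η) τ ⊆ Set.Ioo (τ - η') τ := by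
  intro η η' h t ⟨h1, h2⟩; exact ⟨by linarith, h2⟩

lemma right_nonempty {a b τ : ℝ} (hτ : τ ∈ Set.Ioo a b) :
    ∀ η > 0, ∃ t ∈ Set.Ioo a b, t ∈ Set.Ioo τ (τ + η) := by
  intro η hη
  obtain ⟨h1, h2⟩ := hτ
  refine ⟨min (τ + η/2) ((τ + b)/2), ⟨?_, ?_⟩, ?_, ?_⟩
  · have := lt_min (show τ < τ + η/2 by linarith) (show τ < (τ + b)/2 by linarith)
    linarith
  · have := min_le_right (τ + η/2) ((τ + b)/2); linarith
  · exact lt_min (by linarith) (by linarith)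
  · have := min_le_left (τ + η/2) ((τ + b)/2); linarith

lemma left_nonempty {a b τ : ℝ} (hτ : τ ∈ Set.Ioo a b) :
    ∀ η > 0, ∃ t ∈ Set.Ioo a b, t ∈ Set.Ioo (τ - η) τ := by
  intro η hη
  obtain ⟨h1, h2⟩ := hτ
  refine ⟨max (τ - η/2) ((a + τ)/2), ⟨?_, ?_⟩, ?_, ?_⟩
  · have := le_max_right (τ - η/2) ((a + τ)/2); linarith
  · have := max_lt (show τ - η/2 < τ by linarith) (show (a + τ)/2 < τ by linarith)
    linarith
  · have := le_max_left (τ - η/2) ((a + τ)/2); linarith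
  · exact max_lt (by linarith) (by linarith)

lemma hasSided_add {a b : ℝ} {f g : ℝ → ℝ → ℝ}
    (hf : HasSidedLimits a b f) (hg : HasSidedLimits a b g) :
    HasSidedLimits a b (fun t s => f t s + g t s) := by
  intro τ hτ
  obtain ⟨⟨c1, h1⟩, ⟨c2, h2⟩⟩ := hf τ hτ
  obtain ⟨⟨c1', h1'⟩, ⟨c2', h2'⟩⟩ := hg τ hτ
  exact ⟨⟨c1 + c1', wlim_add (right_mono τ) h1 h1'⟩,
    ⟨c2 + c2', wlim_add (left_mono τ) h2 h2'⟩⟩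

lemma hasSided_smul {a b : ℝ} (r : ℝ) {f : ℝ → ℝ → ℝ}
    (hf : HasSidedLimits a b f) :
    HasSidedLimits a b (fun t s => r * f t s) := by
  intro τ hτ
  obtain ⟨⟨c1, h1⟩, ⟨c2, h2⟩⟩ := hf τ hτ
  exact ⟨⟨r * c1, wlim_smul r h1⟩, ⟨r * c2, wlim_smul r h2⟩⟩

lemma hasSided_zero (a b : ℝ) : HasSidedLimits a b (fun _ _ => (0:ℝ)) :=
  fun τ _ => ⟨⟨0, wlim_zero a b _⟩, ⟨0, wlim_zero a b _⟩⟩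

/-- `ℝ × ℝ` with the discrete topology. -/
def D : Type := ℝ × ℝ

instance : TopologicalSpace D := ⊥
instance : DiscreteTopology D := ⟨rfl⟩

open BoundedContinuousFunction

/-- View a bounded function on `D` as a dynamic function. -/
def asFun (f : D →ᵇ ℝ) : ℝ → ℝ → ℝ := fun t s => f ⟨t, s⟩

/-- The space of truncated dynamic test functions with support in `[c,d] × J`. -/
def Xsub (a b c d : ℝ) : Submodule ℝ (D →ᵇ ℝ) where
  carrier := {f | (∀ t s : ℝ, s ∉ Jset → f ⟨t, s⟩ = 0) ∧
    (∀ t ∉ Set.Icc c d, ∀ s : ℝ, f ⟨t, s⟩ = 0) ∧ HasSidedLimits a b (asFun f)}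
  add_mem' := by
    rintro f g ⟨f1, f2, f3⟩ ⟨g1, g2, g3⟩
    refine ⟨fun t s hs => ?_, fun t ht s => ?_, ?_⟩
    · show f ⟨t, s⟩ + g ⟨t, s⟩ = 0; simp [f1 t s hs, g1 t s hs]
    · show f ⟨t, s⟩ + g ⟨t, s⟩ = 0; simp [f2 t ht s, g2 t ht s]
    · exact hasSided_add f3 g3
  zero_mem' := by
    refine ⟨fun t s _ => rfl, fun t _ s => rfl, ?_⟩
    exact hasSided_zero a b
  smul_mem' := by
    rintro r f ⟨f1, f2, f3⟩
    refine ⟨fun t s hs => ?_, fun t ht s => ?_, ?_⟩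
    · simp [f1 t s hs]
    · simp [f2 t ht s]
    · exact hasSided_smul r f3

lemma isClosed_Xsub (a b c d : ℝ) : IsClosed (Xsub a b c d : Set (D →ᵇ ℝ)) := by
  refine IsSeqClosed.isClosed fun g f hg hgf => ?_
  have hpt : ∀ p : D, Tendsto (fun n => g n p) atTop (nhds (f p)) := fun p =>
    ((continuous_eval_const p).tendsto f).comp hgf
  have happ : ∀ m : ℕ, ∃ n, dist (g n) f ≤ 1 / (m + 1) := by
    intro m
    have := (Metric.tendsto_atTop.mp hgf) (1/(m+1)) (by positivity)
    obtain ⟨N, hN⟩ := this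
    exact ⟨N, (hN N le_rfl).le⟩
  choose idx hidx using happ
  have happ' : ∀ m : ℕ, ∀ t s : ℝ, |g (idx m) ⟨t, s⟩ - f ⟨t, s⟩| ≤ 1 / (m + 1) := by
    intro m t s
    have := BoundedContinuousFunction.dist_coe_le_dist (f := g (idx m)) (g := f) (⟨t, s⟩ : D)
    rw [Real.dist_eq] at this
    exact this.trans (hidx m)
  refine ⟨fun t s hs => ?_, fun t ht s => ?_, ?_⟩
  · refine tendsto_nhds_unique (hpt ⟨t, s⟩) ?_
    have : ∀ n, g n (⟨t, s⟩ : D) = 0 := fun n => (hg n).1 t s hs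
    simpa [this] using tendsto_const_nhds
  · refine tendsto_nhds_unique (hpt ⟨t, s⟩) ?_
    have : ∀ n, g n (⟨t, s⟩ : D) = 0 := fun n => (hg n).2.1 t ht s
    simpa [this] using tendsto_const_nhds
  · intro τ hτ
    constructor
    · simp only [rightLim_eq_wlim]
      exact wlim_of_unif (right_nonempty hτ) (right_mono τ)
        (fun m => ((hg (idx m)).2.2 τ hτ).1) (fun m t s => happ' m t s)
    · simp only [leftLim_eq_wlim]
      exact wlim_of_unif (left_nonempty hτ) (left_mono τ)
        (fun m => ((hg (idx m)).2.2 τ hτ).2) (fun m t s => happ' m t s)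

end Stmt9

namespace Stmt9

open BoundedContinuousFunction

open Classical in
/-- Truncation of a dynamic function outside of `J`. -/
def Trunc (f : ℝ → ℝ → ℝ) : ℝ → ℝ → ℝ := fun t s => if s ∈ Jset then f t s else 0

lemma wlim_congr {a b : ℝ} {W : ℝ → Set ℝ} {f g : ℝ → ℝ → ℝ} {c : ℝ}
    (h : ∀ t s, s ∈ Jset → f t s = g t s) (hf : WLim a b W f c) : WLim a b W g c := by
  intro ε hε
  obtain ⟨η, hη, hh⟩ := hf ε hε
  exact ⟨η, hη, fun t ht htW s hs => h t s hs ▸ hh t ht htW s hs⟩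

lemma hasSided_trunc {a b : ℝ} {ψ : ℝ → ℝ → ℝ} (h : HasSidedLimits a b ψ) :
    HasSidedLimits a b (Trunc ψ) := by
  intro τ hτ
  obtain ⟨⟨c1, h1⟩, ⟨c2, h2⟩⟩ := h τ hτ
  have e : ∀ t s, s ∈ Jset → ψ t s = Trunc ψ t s := fun t s hs => by
    simp [Trunc, if_pos hs]
  exact ⟨⟨c1, wlim_congr e h1⟩, ⟨c2, wlim_congr e h2⟩⟩

section Main

variable {a b c d : ℝ}

lemma Icc_subset_Ioo' (hac : a < c) (hdb : d < b) :
    Set.Icc c d ⊆ Set.Ioo a b := fun t ⟨h1, h2⟩ =>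
  ⟨lt_of_lt_of_le hac h1, lt_of_le_of_lt h2 hdb⟩

/-- The truncation of a test function with support in `[c,d]` is a test function. -/
lemma trunc_isDynTest (hac : a < c) (hcd : c ≤ d) (hdb : d < b)
    {ψ : ℝ → ℝ → ℝ} (hψ : IsDynTest a b ψ)
    (hsupp : ∀ t ∉ Set.Icc c d, ∀ s ∈ Jset, ψ t s = 0) :
    IsDynTest a b (Trunc ψ) := by
  obtain ⟨⟨M, hM⟩, hsl, _⟩ := hψ
  refine ⟨⟨M, fun t ht s hs => ?_⟩, hasSided_trunc hsl, c, d, hac, hcd, hdb,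
    fun t ht s hs => ?_⟩
  · simp only [Trunc, if_pos hs]; exact hM t ht s hs
  · simp only [Trunc, if_pos hs]; exact hsupp t ht s hs

/-- The truncation embeds into `Xsub`. -/
lemma exists_mem_X (hac : a < c) (hcd : c ≤ d) (hdb : d < b)
    {ψ : ℝ → ℝ → ℝ} (hψ : IsDynTest a b ψ)
    (hsupp : ∀ t ∉ Set.Icc c d, ∀ s ∈ Jset, ψ t s = 0) :
    ∃ x : Xsub a b c d, asFun (x : D →ᵇ ℝ) = Trunc ψ := by
  obtain ⟨⟨M, hM⟩, hsl, _⟩ := hψ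
  have hbd : ∀ p : D, ‖Trunc ψ p.1 p.2‖ ≤ max M 0 := by
    rintro ⟨t, s⟩
    rw [Real.norm_eq_abs]
    by_cases hs : s ∈ Jset
    · by_cases ht : t ∈ Set.Icc c d
      · simp only [Trunc, if_pos hs]
        exact le_max_of_le_left (hM t (Icc_subset_Ioo' hac hdb ht) s hs)
      · simp only [Trunc, if_pos hs, hsupp t ht s hs]
        simp
    · simp [Trunc, if_neg hs]
  refine ⟨⟨BoundedContinuousFunction.ofNormedAddCommGroupDiscrete
    (fun p : D => Trunc ψ p.1 p.2) (max M 0) hbd, ?_, ?_, ?_⟩, rfl⟩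
  · intro t s hs
    simp [Trunc, if_neg hs]
  · intro t ht s
    by_cases hs : s ∈ Jset
    · simp [Trunc, if_pos hs, hsupp t ht s hs]
    · simp [Trunc, if_neg hs]
  · exact hasSided_trunc hsl

/-- Any element of `Xsub` gives a dynamic test function. -/
lemma memX_isDynTest (hac : a < c) (hcd : c ≤ d) (hdb : d < b) (x : Xsub a b c d) : IsDynTest a b (asFun (x : D →ᵇ ℝ)) := by
  obtain ⟨h1, h2, h3⟩ := x.2
  refine ⟨⟨‖(x : D →ᵇ ℝ)‖, fun t _ s _ => ?_⟩, h3, c, d, hac, hcd, hdb,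
    fun t ht s _ => h2 t ht s⟩
  have := BoundedContinuousFunction.norm_coe_le_norm (x : D →ᵇ ℝ) (⟨t, s⟩ : D)
  rwa [Real.norm_eq_abs] at this

/-- A `𝒯`-sequentially continuous functional agrees on a test function and its
truncation. -/
lemma seqContT_trunc_eq (hac : a < c) (hcd : c ≤ d) (hdb : d < b)
    {G : (ℝ → ℝ → ℝ) → ℝ} (hG : SeqContT a b G)
    {ψ : ℝ → ℝ → ℝ} (hψ : IsDynTest a b ψ)
    (hsupp : ∀ t ∉ Set.Icc c d, ∀ s ∈ Jset, ψ t s = 0) :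
    G (Trunc ψ) = G ψ := by
  have hT := trunc_isDynTest hac hcd hdb hψ hsupp
  have : Filter.Tendsto (fun _ : ℕ => G (Trunc ψ)) Filter.atTop (nhds (G ψ)) := by
    refine hG (fun _ => Trunc ψ) ψ (fun _ => hT) hψ ⟨⟨c, d, hac, hcd, hdb,
      fun _ t ht s hs => ?_⟩, fun ε hε => ⟨0, fun n _ t ht s hs => ?_⟩⟩
    · simp only [Trunc, if_pos hs]; exact hsupp t ht s hs
    · simp only [Trunc, if_pos hs, sub_self, abs_zero]; exact hε
  exact tendsto_const_nhds_iff.mp this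

end Main

end Stmt9

/-- Abstract uniform boundedness core. -/
lemma ub_core {E : Type*} [NormedAddCommGroup E] [NormedSpace ℝ E] [CompleteSpace E]
    (T : ℕ → E →ₗ[ℝ] ℝ) (hTcont : ∀ n, Continuous fun x => T n x)
    (hbd : ∀ x : E, ∃ C, ∀ n, ‖T n x‖ ≤ C) :
    ∃ C, 0 ≤ C ∧ ∀ (n : ℕ) (x : E), ‖T n x‖ ≤ C * ‖x‖ := by
  let g : ℕ → E →L[ℝ] ℝ := fun n => ⟨T n, hTcont n⟩
  obtain ⟨C, hC⟩ := banach_steinhaus (g := g) hbd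
  refine ⟨max C 0, le_max_right _ _, fun n x => ?_⟩
  calc ‖T n x‖ = ‖g n x‖ := rfl
    _ ≤ ‖g n‖ * ‖x‖ := (g n).le_opNorm x
    _ ≤ max C 0 * ‖x‖ :=
        mul_le_mul_of_nonneg_right ((hC n).trans (le_max_left _ _)) (norm_nonneg x)

set_option maxHeartbeats 2000000 in
open Stmt9 BoundedContinuousFunction in
/-- the pointwise limit of linear `𝒯`-sequentially continuous functionals
is itself `𝒯`-sequentially continuous on dynamic test functions. -/
theorem stmt_9 (a b : ℝ) (F : ℕ → (ℝ → ℝ → ℝ) →ₗ[ℝ] ℝ) (Flim : (ℝ → ℝ → ℝ) → ℝ)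
    (hcont : ∀ n, SeqContT a b (F n))
    (hlim : ∀ φ, IsDynTest a b φ →
      Filter.Tendsto (fun n => F n φ) Filter.atTop (nhds (Flim φ)))
    (φk : ℕ → ℝ → ℝ → ℝ) (φ : ℝ → ℝ → ℝ)
    (hφk : ∀ k, IsDynTest a b (φk k)) (hφ : IsDynTest a b φ)
    (hconv : TendstoT a b φk φ) :
    Filter.Tendsto (fun k => Flim (φk k)) Filter.atTop (nhds (Flim φ)) := by
  classical
  obtain ⟨⟨c1, d1, hac1, hcd1, hdb1, hsupp1⟩, hunif⟩ := hconv
  obtain ⟨c2, d2, hac2, hcd2, hdb2, hsupp2⟩ := hφ.2.2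
  set c := min c1 c2 with hc
  set d := max d1 d2 with hd
  have hac : a < c := lt_min hac1 hac2
  have hcd : c ≤ d := (min_le_left _ _).trans (hcd1.trans (le_max_left _ _))
  have hdb : d < b := max_lt hdb1 hdb2
  have hsub1 : Set.Icc c1 d1 ⊆ Set.Icc c d :=
    Set.Icc_subset_Icc (min_le_left _ _) (le_max_left _ _)
  have hsub2 : Set.Icc c2 d2 ⊆ Set.Icc c d :=
    Set.Icc_subset_Icc (min_le_right _ _) (le_max_right _ _)
  have hsφ : ∀ t ∉ Set.Icc c d, ∀ s ∈ Jset, φ t s = 0 :=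
    fun t ht s hs => hsupp2 t (fun hm => ht (hsub2 hm)) s hs
  have hsk : ∀ k, ∀ t ∉ Set.Icc c d, ∀ s ∈ Jset, φk k t s = 0 :=
    fun k t ht s hs => hsupp1 k t (fun hm => ht (hsub1 hm)) s hs
  haveI : CompleteSpace (Xsub a b c d) := (isClosed_Xsub a b c d).completeSpace_coe
  obtain ⟨x, hx⟩ := exists_mem_X hac hcd hdb hφ hsφ
  have hexk : ∀ k, ∃ y : Xsub a b c d, asFun (y : D →ᵇ ℝ) = Trunc (φk k) :=
    fun k => exists_mem_X hac hcd hdb (hφk k) (hsk k)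
  choose xk hxk using hexk
  -- the linear map from `Xsub` to dynamic functions
  let L : Xsub a b c d →ₗ[ℝ] (ℝ → ℝ → ℝ) :=
    { toFun := fun y => asFun (y : D →ᵇ ℝ)
      map_add' := by intro y z; funext t s; simp [asFun]; rfl
      map_smul' := by intro r y; funext t s; simp [asFun] }
  have hLtest : ∀ y : Xsub a b c d, IsDynTest a b (L y) :=
    fun y => memX_isDynTest hac hcd hdb y
  -- pointwise evaluation bound
  have hptle : ∀ (y z : Xsub a b c d) (t s : ℝ),
      |L y t s - L z t s| ≤ ‖y - z‖ := by
    intro y z t s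
    have h1 : L y t s - L z t s = ((y : D →ᵇ ℝ) - (z : D →ᵇ ℝ)) (⟨t, s⟩ : D) := by
      simp [L, asFun]; rfl
    rw [h1, ← Real.norm_eq_abs]
    have h2 := BoundedContinuousFunction.norm_coe_le_norm
      ((y : D →ᵇ ℝ) - (z : D →ᵇ ℝ)) (⟨t, s⟩ : D)
    have h3 : ‖(y : D →ᵇ ℝ) - (z : D →ᵇ ℝ)‖ = ‖y - z‖ := by
      rw [Submodule.coe_norm, Submodule.coe_sub]
    rw [h3] at h2
    exact h2
  -- the continuous linear functionals
  have gcont : ∀ n, Continuous fun y : Xsub a b c d => F n (L y) := by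
    intro n
    refine continuous_iff_seqContinuous.mpr ?_
    intro u x0 hu
    refine hcont n (fun j => L (u j)) (L x0) (fun j => hLtest _) (hLtest _)
      ⟨⟨c, d, hac, hcd, hdb, fun j t ht s _ => (u j).2.2.1 t ht s⟩, ?_⟩
    intro ε hε
    have hu' : Filter.Tendsto (fun j => ((u j : D →ᵇ ℝ))) Filter.atTop
        (nhds (x0 : D →ᵇ ℝ)) := (continuous_subtype_val.tendsto x0).comp hu
    obtain ⟨N, hN⟩ := Metric.tendsto_atTop.mp hu' ε hε
    refine ⟨N, fun j hj t ht s hs => ?_⟩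
    have h1 := BoundedContinuousFunction.dist_coe_le_dist
      (f := (u j : D →ᵇ ℝ)) (g := (x0 : D →ᵇ ℝ)) (⟨t, s⟩ : D)
    rw [Real.dist_eq] at h1
    calc |L (u j) t s - L x0 t s|
        ≤ dist ((u j : D →ᵇ ℝ)) (x0 : D →ᵇ ℝ) := h1
      _ < ε := hN j hj
  have hptbdd : ∀ y : Xsub a b c d, ∃ C, ∀ n, ‖((F n).comp L) y‖ ≤ C := by
    intro y
    obtain ⟨C, hC⟩ := ((hlim (L y) (hLtest y)).norm).bddAbove_range
    exact ⟨C, fun n => hC (Set.mem_range_self n)⟩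
  have hTcont' : ∀ n, Continuous fun y : Xsub a b c d => ((F n).comp L) y :=
    fun n => gcont n
  obtain ⟨C, hC0, hC⟩ := ub_core (E := Xsub a b c d) (T := fun n => (F n).comp L)
    hTcont' hptbdd
  -- key uniform estimate
  have key : ∀ y z : Xsub a b c d, |Flim (L y) - Flim (L z)| ≤ C * ‖y - z‖ := by
    intro y z
    have h3 := (hlim (L y) (hLtest y)).sub (hlim (L z) (hLtest z))
    refine le_of_tendsto h3.abs (Eventually.of_forall fun n => ?_)
    have e : F n (L y) - F n (L z) = ((F n).comp L) (y - z) := by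
      rw [LinearMap.comp_apply, map_sub L, map_sub (F n)]
    rw [e, ← Real.norm_eq_abs]
    exact hC n (y - z)
  -- identification of the values of `Flim`
  have hLx : L x = Trunc φ := hx
  have hLxk : ∀ k, L (xk k) = Trunc (φk k) := hxk
  have hFeqφ : Flim (Trunc φ) = Flim φ := by
    have h1 := hlim (Trunc φ) (trunc_isDynTest hac hcd hdb hφ hsφ)
    have e : ∀ n : ℕ, F n (Trunc φ) = F n φ :=
      fun n => seqContT_trunc_eq hac hcd hdb (hcont n) hφ hsφ
    refine tendsto_nhds_unique ?_ (hlim φ hφ)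
    simpa only [e] using h1
  have hFeqk : ∀ k, Flim (Trunc (φk k)) = Flim (φk k) := by
    intro k
    have h1 := hlim (Trunc (φk k)) (trunc_isDynTest hac hcd hdb (hφk k) (hsk k))
    have e : ∀ n : ℕ, F n (Trunc (φk k)) = F n (φk k) :=
      fun n => seqContT_trunc_eq hac hcd hdb (hcont n) (hφk k) (hsk k)
    refine tendsto_nhds_unique ?_ (hlim (φk k) (hφk k))
    simpa only [e] using h1
  -- norm convergence of the truncations
  have hnorm : Filter.Tendsto (fun k => ‖xk k - x‖) Filter.atTop (nhds 0) := by
    rw [Metric.tendsto_atTop]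
    intro ε hε
    obtain ⟨N, hN⟩ := hunif (ε/2) (by positivity)
    refine ⟨N, fun k hk => ?_⟩
    rw [Real.dist_eq, sub_zero, abs_of_nonneg (norm_nonneg (xk k - x))]
    have hb : ‖((xk k : D →ᵇ ℝ) - (x : D →ᵇ ℝ))‖ ≤ ε/2 := by
      rw [BoundedContinuousFunction.norm_le (by positivity)]
      rintro ⟨t, s⟩
      have hv : ((xk k : D →ᵇ ℝ) - (x : D →ᵇ ℝ)) (⟨t, s⟩ : D)
          = Trunc (φk k) t s - Trunc φ t s := by
        have e1 : (xk k : D →ᵇ ℝ) (⟨t, s⟩ : D) = Trunc (φk k) t s :=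
          congrFun (congrFun (hxk k) t) s
        have e2 : (x : D →ᵇ ℝ) (⟨t, s⟩ : D) = Trunc φ t s :=
          congrFun (congrFun hx t) s
        rw [← e1, ← e2]; rfl
      rw [hv, Real.norm_eq_abs]
      by_cases hs : s ∈ Jset
      · by_cases ht : t ∈ Set.Ioo a b
        · have := hN k hk t ht s hs
          simp only [Stmt9.Trunc, if_pos hs]
          linarith
        · have htc : t ∉ Set.Icc c d := fun hm => ht (Icc_subset_Ioo' hac hdb hm)
          simp only [Stmt9.Trunc, if_pos hs, hsk k t htc s hs, hsφ t htc s hs]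
          simp
          positivity
      · simp only [Stmt9.Trunc, if_neg hs]
        simp
        positivity
    have h3 : ‖xk k - x‖ = ‖((xk k : D →ᵇ ℝ) - (x : D →ᵇ ℝ))‖ := by
      rw [Submodule.coe_norm, Submodule.coe_sub]
    rw [h3]
    linarith
  -- conclusion
  have hbound : ∀ k, |Flim (φk k) - Flim φ| ≤ C * ‖xk k - x‖ := by
    intro k
    have h := key (xk k) x
    rw [hLxk k, hLx, hFeqk k, hFeqφ] at h
    exact h
  rw [tendsto_iff_dist_tendsto_zero]
  have hCn : Filter.Tendsto (fun k => C * ‖xk k - x‖) Filter.atTop (nhds 0) := by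
    simpa using hnorm.const_mul C
  refine tendsto_of_tendsto_of_tendsto_of_le_of_le tendsto_const_nhds hCn
    (fun k => dist_nonneg) (fun k => ?_)
  rw [Real.dist_eq]
  exact hbound k
end
end

section
/- Let p, q : ℝ → ℝ be monotone nondecreasing, right-continuous functions that are moreover continuous, and let μ_p, μ_q denote their Lebesgue–Stieltjes measures. Then for all real a ≤ t: p(t)·q(t) − p(a)·q(a) = ∫_{(a,t]} q dμ_p + ∫_{(a,t]} p dμ_q. -/
open Set MeasureTheory

noncomputable section

lemma aux_atom (q : StieltjesFunction ℝ) (hq : Continuous q) (x : ℝ) :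
    q.measure {x} = 0 := by
  rw [q.measure_singleton,
    leftLim_eq_of_tendsto
      ((hq.tendsto x).mono_left nhdsWithin_le_nhds)]
  simp

lemma aux_integrable (p q : StieltjesFunction ℝ) (hq : Continuous q) (a t : ℝ) :
    IntegrableOn q (Set.Ioc a t) p.measure := by
  have : IntegrableOn q (Set.Icc a t) p.measure :=
    hq.continuousOn.integrableOn_compact isCompact_Icc
  exact this.mono_set Ioc_subset_Icc_self

/-- integration by parts for Lebesgue–Stieltjes measures of continuous
monotone nondecreasing (right-continuous) functions:
`p(t)q(t) − p(a)q(a) = ∫_(a,t] q dμ_p + ∫_(a,t] p dμ_q` for `a ≤ t`. -/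
theorem stmt_15 (p q : StieltjesFunction ℝ) (hp : Continuous p) (hq : Continuous q)
    (a t : ℝ) (h : a ≤ t) :
    p t * q t - p a * q a =
      (∫ x in Set.Ioc a t, q x ∂p.measure) + ∫ x in Set.Ioc a t, p x ∂q.measure := by
  set μ := p.measure
  set ν := q.measure
  set I : Set ℝ := Set.Ioc a t with hI
  set s₁ : Set (ℝ × ℝ) := (I ×ˢ Set.Ioi a) ∩ {z | z.2 ≤ z.1} with hs₁def
  set s₂ : Set (ℝ × ℝ) := (Set.Ioi a ×ˢ I) ∩ {z | z.1 ≤ z.2} with hs₂def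
  have hs₁ : MeasurableSet s₁ :=
    (measurableSet_Ioc.prod measurableSet_Ioi).inter
      (measurableSet_le measurable_snd measurable_fst)
  have hs₂ : MeasurableSet s₂ :=
    (measurableSet_Ioi.prod measurableSet_Ioc).inter
      (measurableSet_le measurable_fst measurable_snd)
  -- first slice computation
  have h1 : (μ.prod ν) s₁ = ∫⁻ x in I, ν (Set.Ioc a x) ∂μ := by
    rw [Measure.prod_apply hs₁]
    rw [← lintegral_indicator measurableSet_Ioc _]
    congr 1
    ext x
    by_cases hx : x ∈ I
    · have : Prod.mk x ⁻¹' s₁ = Set.Ioc a x := by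
        ext y
        simp only [hs₁def, Set.mem_preimage, Set.mem_inter_iff, Set.mem_prod,
          Set.mem_Ioi, Set.mem_setOf_eq, Set.mem_Ioc]
        exact ⟨fun ⟨⟨_, hy⟩, hyx⟩ => ⟨hy, hyx⟩, fun ⟨hy, hyx⟩ => ⟨⟨hx, hy⟩, hyx⟩⟩
      rw [this, Set.indicator_of_mem hx]
    · have : Prod.mk x ⁻¹' s₁ = ∅ := by
        ext y
        simp only [hs₁def, Set.mem_preimage, Set.mem_inter_iff, Set.mem_prod,
          Set.mem_empty_iff_false, iff_false]
        rintro ⟨⟨hx', _⟩, _⟩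
        exact hx hx'
      rw [this, Set.indicator_of_notMem hx, measure_empty]
  have h2 : (μ.prod ν) s₂ = ∫⁻ y in I, μ (Set.Ioc a y) ∂ν := by
    rw [Measure.prod_apply_symm hs₂]
    rw [← lintegral_indicator measurableSet_Ioc _]
    congr 1
    ext y
    by_cases hy : y ∈ I
    · have : (fun x => (x, y)) ⁻¹' s₂ = Set.Ioc a y := by
        ext x
        simp only [hs₂def, Set.mem_preimage, Set.mem_inter_iff, Set.mem_prod,
          Set.mem_Ioi, Set.mem_setOf_eq, Set.mem_Ioc]
        exact ⟨fun ⟨⟨hx, _⟩, hxy⟩ => ⟨hx, hxy⟩, fun ⟨hx, hxy⟩ => ⟨⟨hx, hy⟩, hxy⟩⟩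
      rw [this, Set.indicator_of_mem hy]
    · have : (fun x => (x, y)) ⁻¹' s₂ = ∅ := by
        ext x
        simp only [hs₂def, Set.mem_preimage, Set.mem_inter_iff, Set.mem_prod,
          Set.mem_empty_iff_false, iff_false]
        rintro ⟨⟨_, hy'⟩, _⟩
        exact hy hy'
      rw [this, Set.indicator_of_notMem hy, measure_empty]
  -- union and intersection
  have hunion : s₁ ∪ s₂ = I ×ˢ I := by
    ext ⟨x, y⟩
    simp only [hs₁def, hs₂def, Set.mem_union, Set.mem_inter_iff, Set.mem_prod,
      Set.mem_Ioi, Set.mem_setOf_eq, hI, Set.mem_Ioc]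
    constructor
    · rintro (⟨⟨⟨hax, hxt⟩, hay⟩, hyx⟩ | ⟨⟨hax, hay, hyt⟩, hxy⟩)
      · exact ⟨⟨hax, hxt⟩, hay, hyx.trans hxt⟩
      · exact ⟨⟨hax, hxy.trans hyt⟩, hay, hyt⟩
    · rintro ⟨⟨hax, hxt⟩, hay, hyt⟩
      rcases le_total y x with hc | hc
      · exact Or.inl ⟨⟨⟨hax, hxt⟩, hay⟩, hc⟩
      · exact Or.inr ⟨⟨hax, hay, hyt⟩, hc⟩
  have hdiag : (μ.prod ν) {z : ℝ × ℝ | z.1 = z.2} = 0 := by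
    rw [Measure.prod_apply (measurableSet_eq_fun measurable_fst measurable_snd)]
    have heq : ∀ x : ℝ, ν (Prod.mk x ⁻¹' {z : ℝ × ℝ | z.1 = z.2}) = 0 := by
      intro x
      have : Prod.mk x ⁻¹' {z : ℝ × ℝ | z.1 = z.2} = {x} := by
        ext y; simp [eq_comm]
      rw [this]
      exact aux_atom q hq x
    rw [lintegral_congr heq, lintegral_zero]
  have hinter : (μ.prod ν) (s₁ ∩ s₂) = 0 := by
    refine measure_mono_null ?_ hdiag
    rintro ⟨x, y⟩ ⟨⟨_, hyx⟩, ⟨_, hxy⟩⟩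
    exact le_antisymm hxy hyx
  have hsum : (∫⁻ x in I, ν (Set.Ioc a x) ∂μ) + ∫⁻ y in I, μ (Set.Ioc a y) ∂ν
      = μ I * ν I := by
    rw [← h1, ← h2, ← measure_union_add_inter s₁ hs₂, hinter, add_zero, hunion,
      Measure.prod_prod]
  -- convert lintegrals to integrals
  have hqpos : 0 ≤ᵐ[μ.restrict I] fun x => q x - q a := by
    filter_upwards [ae_restrict_mem measurableSet_Ioc] with x hx
    exact sub_nonneg.2 (q.mono hx.1.le)
  have hppos : 0 ≤ᵐ[ν.restrict I] fun x => p x - p a := by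
    filter_upwards [ae_restrict_mem measurableSet_Ioc] with x hx
    exact sub_nonneg.2 (p.mono hx.1.le)
  have hqi : IntegrableOn (fun x => q x - q a) I μ :=
    (aux_integrable p q hq a t).sub (integrableOn_const (by
      rw [p.measure_Ioc]; exact ENNReal.ofReal_ne_top))
  have hpi : IntegrableOn (fun x => p x - p a) I ν :=
    (aux_integrable q p hp a t).sub (integrableOn_const (by
      rw [q.measure_Ioc]; exact ENNReal.ofReal_ne_top))
  have e1 : (∫⁻ x in I, ν (Set.Ioc a x) ∂μ)
      = ENNReal.ofReal (∫ x in I, (q x - q a) ∂μ) := by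
    rw [ofReal_integral_eq_lintegral_ofReal hqi hqpos]
    congr 1 with x
    rw [q.measure_Ioc]
  have e2 : (∫⁻ y in I, μ (Set.Ioc a y) ∂ν)
      = ENNReal.ofReal (∫ y in I, (p y - p a) ∂ν) := by
    rw [ofReal_integral_eq_lintegral_ofReal hpi hppos]
    congr 1 with y
    rw [p.measure_Ioc]
  have hi1 : 0 ≤ ∫ x in I, (q x - q a) ∂μ := integral_nonneg_of_ae hqpos
  have hi2 : 0 ≤ ∫ y in I, (p y - p a) ∂ν := integral_nonneg_of_ae hppos
  have key : (∫ x in I, (q x - q a) ∂μ) + ∫ y in I, (p y - p a) ∂ν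
      = (p t - p a) * (q t - q a) := by
    have := hsum
    rw [e1, e2, ← ENNReal.ofReal_add hi1 hi2, hI, p.measure_Ioc, q.measure_Ioc,
      ← ENNReal.ofReal_mul (sub_nonneg.2 (p.mono h))] at this
    have hnn : 0 ≤ (p t - p a) * (q t - q a) :=
      mul_nonneg (sub_nonneg.2 (p.mono h)) (sub_nonneg.2 (q.mono h))
    exact (ENNReal.ofReal_eq_ofReal_iff (by positivity) hnn).1 this
  have hμI : (μ I).toReal = p t - p a := by
    rw [hI, p.measure_Ioc, ENNReal.toReal_ofReal (sub_nonneg.2 (p.mono h))]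
  have hνI : (ν I).toReal = q t - q a := by
    rw [hI, q.measure_Ioc, ENNReal.toReal_ofReal (sub_nonneg.2 (q.mono h))]
  have exp1 : (∫ x in I, (q x - q a) ∂μ)
      = (∫ x in I, q x ∂μ) - q a * (p t - p a) := by
    rw [integral_sub (aux_integrable p q hq a t)
      (integrableOn_const (by rw [p.measure_Ioc]; exact ENNReal.ofReal_ne_top)),
      integral_const, smul_eq_mul, measureReal_restrict_apply_univ, measureReal_def,
      show (p.measure (Ioc a t)).toReal = p t - p a from hμI]
    ring
  have exp2 : (∫ y in I, (p y - p a) ∂ν)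
      = (∫ y in I, p y ∂ν) - p a * (q t - q a) := by
    rw [integral_sub (aux_integrable q p hp a t)
      (integrableOn_const (by rw [q.measure_Ioc]; exact ENNReal.ofReal_ne_top)),
      integral_const, smul_eq_mul, measureReal_restrict_apply_univ, measureReal_def,
      show (q.measure (Ioc a t)).toReal = q t - q a from hνI]
    ring
  rw [exp1, exp2] at key
  have := key
  nlinarith [key]
end
end
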